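/- Let A = T(a) + E_a + e v_a^T and B = T(b) + E_b + e v_b^T, where a and b are Wiener-class sequences, E_a and E_b are bounded semi-infinite matrices with the decay property, and v_a, v_b ∈ ℓ¹. Then the entrywise matrix product C := AB can be written as C = T(a⋆b) + E_c + e v_c^T, where E_c is a bounded semi-infinite matrix with the decay property and v_c ∈ ℓ¹ is given by (v_c)_j = (∑_{n∈ℤ} a_n)·(v_b)_j + ∑_{i≥1} (v_a)_i B_{ij}. In particular the class EQT of matrices of this form is closed under matrix multiplication. -/
import Mathlib


open Filter Topology

/-- Every row of `A` is absolutely summable. -/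
def RowsSummable (A : ℕ → ℕ → ℝ) : Prop := ∀ i, Summable fun j => |A i j|

/-- The infinity norm of a semi-infinite matrix: the supremum of the row sums. -/
noncomputable def normInf (A : ℕ → ℕ → ℝ) : ℝ := ⨆ i, ∑' j, |A i j|

/-- `A` is bounded: all row sums are finite and their supremum is finite. -/
def MatBounded (A : ℕ → ℕ → ℝ) : Prop :=
  RowsSummable A ∧ BddAbove (Set.range fun i => ∑' j, |A i j|)

/-- `A` has the decay property: all row sums are finite and tend to zero. -/
def HasDecay (A : ℕ → ℕ → ℝ) : Prop :=
  RowsSummable A ∧ Tendsto (fun i => ∑' j, |A i j|) atTop (𝓝 0)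

/-- The semi-infinite Toeplitz matrix associated with a two-sided sequence:
`T(a)_{ij} = a_{j−i}`. -/
noncomputable def Toep (a : ℤ → ℝ) : ℕ → ℕ → ℝ := fun i j => a ((j : ℤ) - (i : ℤ))

/-- Convolution of two-sided sequences. -/
noncomputable def zconv (a b : ℤ → ℝ) : ℤ → ℝ := fun n => ∑' k : ℤ, a k * b (n - k)

section Helpers

private lemma lemA (c : ℕ → ℝ) (hc : Summable fun k => |c k|) (g : ℕ → ℕ → ℝ)
    (hg : ∀ k, Summable fun j => |g k j|) (M : ℝ) (hM : ∀ k, (∑' j, |g k j|) ≤ M) :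
    (∀ j, Summable fun k => c k * g k j) ∧
    (Summable fun j => |∑' k, c k * g k j|) ∧
    (∑' j, |∑' k, c k * g k j|) ≤ ∑' k, |c k| * ∑' j, |g k j| := by
  have h0 : ∀ p : ℕ × ℕ, 0 ≤ |c p.1| * |g p.1 p.2| :=
    fun p => mul_nonneg (abs_nonneg _) (abs_nonneg _)
  have hrow : ∀ k, Summable fun j => |c k| * |g k j| := fun k => (hg k).mul_left _
  have hsum2 : Summable fun k => ∑' j, |c k| * |g k j| := by
    have he : ∀ k, (∑' j, |c k| * |g k j|) = |c k| * ∑' j, |g k j| := fun k => tsum_mul_left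
    rw [funext he]
    exact Summable.of_nonneg_of_le
      (fun k => mul_nonneg (abs_nonneg _) (tsum_nonneg fun _ => abs_nonneg _))
      (fun k => mul_le_mul_of_nonneg_left (hM k) (abs_nonneg _)) (hc.mul_right M)
  have hP : Summable fun p : ℕ × ℕ => |c p.1| * |g p.1 p.2| :=
    (summable_prod_of_nonneg h0).mpr ⟨hrow, hsum2⟩
  have hPs : Summable fun p : ℕ × ℕ => |c p.2| * |g p.2 p.1| := hP.prod_symm
  have hcol : ∀ j, Summable fun k => |c k| * |g k j| := fun j => hPs.prod_factor j
  have hsumcol : Summable fun j => ∑' k, |c k| * |g k j| :=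
    ((summable_prod_of_nonneg (fun p => h0 p.swap)).mp hPs).2
  have habs : ∀ j, Summable fun k => |c k * g k j| := by
    intro j
    have := hcol j
    simpa [abs_mul] using this
  have hsz : ∀ j, Summable fun k => c k * g k j := fun j => (habs j).of_abs
  have hb1 : ∀ j, |∑' k, c k * g k j| ≤ ∑' k, |c k| * |g k j| := by
    intro j
    have := norm_tsum_le_tsum_norm (f := fun k => c k * g k j)
      (by simp only [Real.norm_eq_abs]; exact habs j)
    simp only [Real.norm_eq_abs, abs_mul] at this
    exact this
  have hS : Summable fun j => |∑' k, c k * g k j| :=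
    Summable.of_nonneg_of_le (fun j => abs_nonneg _) hb1 hsumcol
  refine ⟨hsz, hS, ?_⟩
  have step1 : (∑' j, |∑' k, c k * g k j|) ≤ ∑' j, ∑' k, |c k| * |g k j| :=
    Summable.tsum_le_tsum hb1 hS hsumcol
  have comm : (∑' j, ∑' k, |c k| * |g k j|) = ∑' k, ∑' j, |c k| * |g k j| := by
    have e1 : (∑' p : ℕ × ℕ, |c p.2| * |g p.2 p.1|) = ∑' p : ℕ × ℕ, |c p.1| * |g p.1 p.2| :=
      (Equiv.prodComm ℕ ℕ).tsum_eq (fun p : ℕ × ℕ => |c p.1| * |g p.1 p.2|)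
    rw [← Summable.tsum_prod' hPs (fun b => hPs.prod_factor b), e1]
    exact Summable.tsum_prod' hP (fun b => hP.prod_factor b)
  have last : (∑' k, ∑' j, |c k| * |g k j|) = ∑' k, |c k| * ∑' j, |g k j| :=
    tsum_congr fun k => tsum_mul_left
  calc (∑' j, |∑' k, c k * g k j|) ≤ ∑' j, ∑' k, |c k| * |g k j| := step1
    _ = ∑' k, |c k| * ∑' j, |g k j| := by rw [comm, last]

private lemma coarse (c : ℕ → ℝ) (hc : Summable fun k => |c k|) (g : ℕ → ℕ → ℝ)
    (M : ℝ) (hM : ∀ k, (∑' j, |g k j|) ≤ M) :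
    (∑' k, |c k| * ∑' j, |g k j|) ≤ (∑' k, |c k|) * M := by
  have h1 : Summable fun k => |c k| * ∑' j, |g k j| :=
    Summable.of_nonneg_of_le
      (fun k => mul_nonneg (abs_nonneg _) (tsum_nonneg fun _ => abs_nonneg _))
      (fun k => mul_le_mul_of_nonneg_left (hM k) (abs_nonneg _)) (hc.mul_right M)
  calc (∑' k, |c k| * ∑' j, |g k j|) ≤ ∑' k, |c k| * M :=
        Summable.tsum_le_tsum (fun k => mul_le_mul_of_nonneg_left (hM k) (abs_nonneg _)) h1 (hc.mul_right M)
    _ = (∑' k, |c k|) * M := tsum_mul_right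

private lemma injnat (i : ℕ) : Function.Injective fun k : ℕ => (k : ℤ) - i := by
  intro x y h; simpa [sub_left_inj] using h

private lemma injneg (i : ℕ) : Function.Injective fun k : ℕ => -(i : ℤ) - 1 - k := by
  intro x y h; simp only [sub_left_inj, sub_right_inj, neg_inj, Nat.cast_inj] at h; omega

private lemma injadd (k : ℕ) : Function.Injective fun j : ℕ => (j : ℤ) + 1 + k := by
  intro x y h; dsimp only at h; omega

private lemma zsplit (f : ℤ → ℝ) (hf : Summable f) (i : ℕ) :
    ∑' n : ℤ, f n = (∑' k : ℕ, f ((k : ℤ) - i)) + ∑' k : ℕ, f (-(i : ℤ) - 1 - k) := by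
  have hg : Summable fun n : ℤ => f (n - i) := by
    have := (Equiv.subRight (i : ℤ)).summable_iff (f := f)
    exact this.mpr hf
  have h1 : Summable fun n : ℕ => f ((n : ℤ) - i) := hg.comp_injective Nat.cast_injective
  have h2 : Summable fun n : ℕ => f (-((n : ℤ) + 1) - i) := by
    refine hg.comp_injective ?_
    intro x y h
    dsimp only at h
    omega
  have key := tsum_of_nat_of_neg_add_one (f := fun n : ℤ => f (n - i)) h1 h2
  have heq : (∑' n : ℤ, f (n - i)) = ∑' n : ℤ, f n := (Equiv.subRight (i : ℤ)).tsum_eq f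
  rw [← heq, key]
  congr 1
  exact tsum_congr fun k => congrArg f (by ring)

private lemma tail_tendsto (a : ℤ → ℝ) :
    Tendsto (fun i : ℕ => ∑' k : ℕ, |a (-(i : ℤ) - 1 - k)|) atTop (𝓝 0) := by
  have h : ∀ i : ℕ, (∑' k : ℕ, |a (-(i : ℤ) - 1 - k)|)
      = ∑' k : ℕ, (fun m : ℕ => |a (-1 - (m : ℤ))|) (k + i) := by
    intro i
    exact tsum_congr fun k => congrArg (fun z => |a z|) (by push_cast; ring)
  rw [funext h]
  exact tendsto_sum_nat_add (fun m : ℕ => |a (-1 - (m : ℤ))|)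

private lemma dom_tendsto (a : ℤ → ℝ) (ha : Summable fun n => |a n|) (w : ℕ → ℝ)
    (hw0 : ∀ k, 0 ≤ w k) (M : ℝ) (hwM : ∀ k, w k ≤ M) (hw : Tendsto w atTop (𝓝 0)) :
    Tendsto (fun i : ℕ => ∑' k : ℕ, |a ((k : ℤ) - i)| * w k) atTop (𝓝 0) := by
  have hM0 : 0 ≤ M := (hw0 0).trans (hwM 0)
  set W : ℤ → ℝ := fun n => if 0 ≤ n then w n.toNat else 0 with hW
  have hW0 : ∀ n, 0 ≤ W n := by intro n; by_cases h : 0 ≤ n <;> simp [hW, h, hw0]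
  have hWM : ∀ n, W n ≤ M := by intro n; by_cases h : 0 ≤ n <;> simp [hW, h, hwM, hM0]
  have reidx : ∀ i : ℕ, (∑' k : ℕ, |a ((k : ℤ) - i)| * w k)
      = ∑' m : ℤ, |a m| * W (m + i) := by
    intro i
    have hinj : Function.Injective fun k : ℕ => (k : ℤ) - i := by
      intro x y h; dsimp only at h; omega
    have hzero : ∀ m : ℤ, m ∉ Set.range (fun k : ℕ => (k : ℤ) - i) → |a m| * W (m + i) = 0 := by
      intro m hm
      have : m + i < 0 := by
        by_contra hc
        push_neg at hc
        refine hm ⟨(m + i).toNat, ?_⟩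
        dsimp only
        omega
      simp [hW, not_le.mpr this]
    have hsupp : (Function.support fun m : ℤ => |a m| * W (m + i)) ⊆
        Set.range (fun k : ℕ => (k : ℤ) - i) := by
      intro m hm
      by_contra hc
      exact hm (hzero m hc)
    have := Function.Injective.tsum_eq (f := fun m : ℤ => |a m| * W (m + i)) hinj hsupp
    rw [← this]
    refine tsum_congr fun k => ?_
    show |a ((k : ℤ) - i)| * w k = |a ((k : ℤ) - i)| * W ((k : ℤ) - i + i)
    have h1 : ((k : ℤ) - i + i) = (k : ℤ) := by ring
    rw [h1]
    simp [hW]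
  have main : Tendsto (fun i : ℕ => ∑' m : ℤ, |a m| * W (m + i)) atTop (𝓝 0) := by
    have h0 : (0 : ℝ) = ∑' _ : ℤ, (0 : ℝ) := by simp
    rw [h0]
    apply tendsto_tsum_of_dominated_convergence (bound := fun m : ℤ => |a m| * M)
      (ha.mul_right M)
    · intro m
      have h1 : Tendsto (fun i : ℕ => (m + (i : ℤ)).toNat) atTop atTop := by
        apply tendsto_atTop_atTop.mpr
        intro n
        exact ⟨n + m.natAbs, fun i hi => by omega⟩
      have h2 : Tendsto (fun i : ℕ => w ((m + (i : ℤ)).toNat)) atTop (𝓝 0) := hw.comp h1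
      have h3 : Tendsto (fun i : ℕ => W (m + (i : ℤ))) atTop (𝓝 0) := by
        apply h2.congr'
        filter_upwards [eventually_ge_atTop m.natAbs] with i hi
        have : (0 : ℤ) ≤ m + i := by omega
        simp [hW, this]
      have := h3.const_mul |a m|
      simpa using this
    · filter_upwards with i m
      have : |(|a m| * W (m + i))| = |a m| * W (m + i) :=
        abs_of_nonneg (mul_nonneg (abs_nonneg _) (hW0 _))
      rw [Real.norm_eq_abs, this]
      exact mul_le_mul_of_nonneg_left (hWM _) (abs_nonneg _)
  exact (tendsto_congr reidx).mpr main

private lemma abs6 (x1 x2 x3 x4 x5 x6 : ℝ) :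
    |x1 + x2 + x3 + x4 + x5 + x6| ≤ |x1| + |x2| + |x3| + |x4| + |x5| + |x6| := by
  have a1 := abs_add_le (x1 + x2 + x3 + x4 + x5) x6
  have a2 := abs_add_le (x1 + x2 + x3 + x4) x5
  have a3 := abs_add_le (x1 + x2 + x3) x4
  have a4 := abs_add_le (x1 + x2) x3
  have a5 := abs_add_le x1 x2
  linarith

end Helpers

/- STATEMENT 10: the class EQT is closed under multiplication: for
A = T(a)+E_a+e v_aᵀ and B = T(b)+E_b+e v_bᵀ, the product is
T(a⋆b) + E_c + e v_cᵀ with E_c bounded with the decay property and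
(v_c)_j = (∑_n a_n)·(v_b)_j + ∑_i (v_a)_i B_{ij} in ℓ¹. -/

theorem stmt10 (a b : ℤ → ℝ) (ha : Summable fun n => |a n|)
    (hb : Summable fun n => |b n|)
    (Ea Eb : ℕ → ℕ → ℝ)
    (hEa : MatBounded Ea) (hEad : HasDecay Ea)
    (hEb : MatBounded Eb) (hEbd : HasDecay Eb)
    (va vb : ℕ → ℝ) (hva : Summable fun j => |va j|) (hvb : Summable fun j => |vb j|) :
    Summable (fun j =>
      |(∑' n : ℤ, a n) * vb j + ∑' i, va i * (Toep b i j + Eb i j + vb j)|) ∧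
    ∃ Ec : ℕ → ℕ → ℝ, MatBounded Ec ∧ HasDecay Ec ∧
      ∀ i j, (∑' k, (Toep a i k + Ea i k + va k) * (Toep b k j + Eb k j + vb j)) =
        Toep (zconv a b) i j + Ec i j +
          ((∑' n : ℤ, a n) * vb j + ∑' i', va i' * (Toep b i' j + Eb i' j + vb j)) := by
  obtain ⟨hEaR, hEaB⟩ := hEa
  obtain ⟨-, hEaT⟩ := hEad
  obtain ⟨hEbR, hEbB⟩ := hEb
  obtain ⟨-, hEbT⟩ := hEbd
  obtain ⟨MEb, hMEb'⟩ := hEbB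
  have hMEb : ∀ k, (∑' j, |Eb k j|) ≤ MEb := fun k => hMEb' (Set.mem_range_self k)
  set Mb : ℝ := ∑' n : ℤ, |b n| with hMbdef
  set NV : ℝ := ∑' j, |vb j| with hNVdef
  have hbE : ∀ n : ℤ, |b n| ≤ Mb := fun n => Summable.le_tsum hb n fun _ _ => abs_nonneg _
  have hEbE : ∀ k j, |Eb k j| ≤ MEb := fun k j =>
    (Summable.le_tsum (hEbR k) j fun _ _ => abs_nonneg _).trans (hMEb k)
  have hvbE : ∀ j, |vb j| ≤ NV := fun j => Summable.le_tsum hvb j fun _ _ => abs_nonneg _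
  have hsa1 : ∀ i : ℕ, Summable fun k : ℕ => |a ((k : ℤ) - i)| :=
    fun i => ha.comp_injective (injnat i)
  have hsa2 : ∀ i : ℕ, Summable fun k : ℕ => |a (-(i : ℤ) - 1 - k)| :=
    fun i => ha.comp_injective (injneg i)
  have hsb1 : ∀ k : ℕ, Summable fun j : ℕ => |b ((j : ℤ) - k)| :=
    fun k => hb.comp_injective (injnat k)
  have hsb2 : ∀ k : ℕ, Summable fun j : ℕ => |b ((j : ℤ) + 1 + k)| :=
    fun k => hb.comp_injective (injadd k)
  have hsb1M : ∀ k : ℕ, (∑' j : ℕ, |b ((j : ℤ) - k)|) ≤ Mb := fun k =>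
    Summable.tsum_le_tsum_of_inj _ (injnat k) (fun _ _ => abs_nonneg _) (fun _ => le_rfl) (hsb1 k) hb
  have hsb2M : ∀ k : ℕ, (∑' j : ℕ, |b ((j : ℤ) + 1 + k)|) ≤ Mb := fun k =>
    Summable.tsum_le_tsum_of_inj _ (injadd k) (fun _ _ => abs_nonneg _) (fun _ => le_rfl) (hsb2 k) hb
  -- facts about B := Toep b + Eb + e vbᵀ
  have hBabs : ∀ k, Summable fun j => |Toep b k j + Eb k j + vb j| := by
    intro k
    refine Summable.of_nonneg_of_le (fun j => abs_nonneg _) (fun j => ?_)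
      (((hsb1 k).add (hEbR k)).add hvb)
    show |Toep b k j + Eb k j + vb j| ≤ |b ((j : ℤ) - k)| + |Eb k j| + |vb j|
    exact abs_add_three _ _ _
  have hBsum : ∀ k, (∑' j, |Toep b k j + Eb k j + vb j|) ≤ Mb + MEb + NV := by
    intro k
    have step : (∑' j, |Toep b k j + Eb k j + vb j|)
        ≤ ∑' j : ℕ, (|b ((j : ℤ) - k)| + |Eb k j| + |vb j|) := by
      refine Summable.tsum_le_tsum (fun j => ?_) (hBabs k) (((hsb1 k).add (hEbR k)).add hvb)
      exact abs_add_three _ _ _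
    have split : (∑' j : ℕ, (|b ((j : ℤ) - k)| + |Eb k j| + |vb j|))
        = (∑' j : ℕ, |b ((j : ℤ) - k)|) + (∑' j, |Eb k j|) + ∑' j, |vb j| := by
      rw [Summable.tsum_add ((hsb1 k).add (hEbR k)) hvb, Summable.tsum_add (hsb1 k) (hEbR k)]
    rw [split] at step
    exact step.trans (add_le_add (add_le_add (hsb1M k) (hMEb k)) le_rfl)
  obtain ⟨hvc1, hvc2, -⟩ := lemA va hva (fun k j => Toep b k j + Eb k j + vb j)
    hBabs (Mb + MEb + NV) hBsum
  constructor
  · refine Summable.of_nonneg_of_le (fun j => abs_nonneg _) (fun j => ?_)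
      ((hvb.mul_left |∑' n : ℤ, a n|).add hvc2)
    calc |(∑' n : ℤ, a n) * vb j + ∑' i, va i * (Toep b i j + Eb i j + vb j)|
        ≤ |(∑' n : ℤ, a n) * vb j| + |∑' i, va i * (Toep b i j + Eb i j + vb j)| :=
          abs_add_le _ _
      _ = |∑' n : ℤ, a n| * |vb j| + |∑' i, va i * (Toep b i j + Eb i j + vb j)| := by
          rw [abs_mul]
  -- now the existence of Ec
  have hNV0 : 0 ≤ NV := by rw [hNVdef]; exact tsum_nonneg fun _ => abs_nonneg _
  have L1 : ∀ i : ℕ, _ := fun i : ℕ => lemA (fun k => a (-(i : ℤ) - 1 - k)) (hsa2 i)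
    (fun k j => b ((j : ℤ) + 1 + k)) (fun k => hsb2 k) Mb (fun k => hsb2M k)
  have L2 : ∀ i : ℕ, _ := fun i : ℕ => lemA (fun k => a ((k : ℤ) - i)) (hsa1 i) Eb hEbR MEb hMEb
  have L4 : ∀ i : ℕ, _ := fun i : ℕ => lemA (Ea i) (hEaR i)
    (fun k j => b ((j : ℤ) - k)) (fun k => hsb1 k) Mb (fun k => hsb1M k)
  have L5 : ∀ i : ℕ, _ := fun i : ℕ => lemA (Ea i) (hEaR i) Eb hEbR MEb hMEb
  set Ec : ℕ → ℕ → ℝ := fun i j =>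
      -(∑' k : ℕ, a (-(i : ℤ) - 1 - k) * b ((j : ℤ) + 1 + k))
      + (∑' k : ℕ, a ((k : ℤ) - i) * Eb k j)
      - (∑' k : ℕ, a (-(i : ℤ) - 1 - k)) * vb j
      + (∑' k : ℕ, Ea i k * b ((j : ℤ) - k))
      + (∑' k : ℕ, Ea i k * Eb k j)
      + (∑' k : ℕ, Ea i k) * vb j with hEcdef
  have hEcrow : ∀ i, Summable fun j => |Ec i j| := by
    intro i
    have s1 : Summable fun j : ℕ => ∑' k : ℕ, a (-(i : ℤ) - 1 - k) * b ((j : ℤ) + 1 + k) :=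
      (L1 i).2.1.of_abs
    have s2 : Summable fun j => ∑' k : ℕ, a ((k : ℤ) - i) * Eb k j := (L2 i).2.1.of_abs
    have s4 : Summable fun j : ℕ => ∑' k : ℕ, Ea i k * b ((j : ℤ) - k) := (L4 i).2.1.of_abs
    have s5 : Summable fun j => ∑' k : ℕ, Ea i k * Eb k j := (L5 i).2.1.of_abs
    have s3 : Summable fun j => (∑' k : ℕ, a (-(i : ℤ) - 1 - k)) * vb j :=
      (hvb.of_abs).mul_left _
    have s6 : Summable fun j => (∑' k : ℕ, Ea i k) * vb j := (hvb.of_abs).mul_left _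
    have : Summable fun j => Ec i j := by
      simp only [hEcdef]
      exact ((((s1.neg.add s2).sub s3).add s4).add s5).add s6
    exact this.abs
  have hEcbound : ∀ i, (∑' j, |Ec i j|) ≤
      (∑' k : ℕ, |a (-(i : ℤ) - 1 - k)|) * Mb
      + (∑' k : ℕ, |a ((k : ℤ) - i)| * ∑' j, |Eb k j|)
      + (∑' k : ℕ, |a (-(i : ℤ) - 1 - k)|) * NV
      + (∑' j, |Ea i j|) * Mb + (∑' j, |Ea i j|) * MEb + (∑' j, |Ea i j|) * NV := by
    intro i
    have F1 : Summable fun j : ℕ => |∑' k : ℕ, a (-(i : ℤ) - 1 - k) * b ((j : ℤ) + 1 + k)| :=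
      (L1 i).2.1
    have F2 : Summable fun j : ℕ => |∑' k : ℕ, a ((k : ℤ) - i) * Eb k j| := (L2 i).2.1
    have F4 : Summable fun j : ℕ => |∑' k : ℕ, Ea i k * b ((j : ℤ) - k)| := (L4 i).2.1
    have F5 : Summable fun j : ℕ => |∑' k : ℕ, Ea i k * Eb k j| := (L5 i).2.1
    have F3 : Summable fun j => |∑' k : ℕ, a (-(i : ℤ) - 1 - k)| * |vb j| :=
      hvb.mul_left _
    have F6 : Summable fun j => |∑' k : ℕ, Ea i k| * |vb j| := hvb.mul_left _
    have hpt : ∀ j, |Ec i j| ≤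
        |∑' k : ℕ, a (-(i : ℤ) - 1 - k) * b ((j : ℤ) + 1 + k)|
        + |∑' k : ℕ, a ((k : ℤ) - i) * Eb k j|
        + |∑' k : ℕ, a (-(i : ℤ) - 1 - k)| * |vb j|
        + |∑' k : ℕ, Ea i k * b ((j : ℤ) - k)|
        + |∑' k : ℕ, Ea i k * Eb k j|
        + |∑' k : ℕ, Ea i k| * |vb j| := by
      intro j
      have e : Ec i j =
          (-(∑' k : ℕ, a (-(i : ℤ) - 1 - k) * b ((j : ℤ) + 1 + k)))
          + (∑' k : ℕ, a ((k : ℤ) - i) * Eb k j)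
          + (-((∑' k : ℕ, a (-(i : ℤ) - 1 - k)) * vb j))
          + (∑' k : ℕ, Ea i k * b ((j : ℤ) - k))
          + (∑' k : ℕ, Ea i k * Eb k j)
          + (∑' k : ℕ, Ea i k) * vb j := by
        simp only [hEcdef]; ring
      rw [e]
      have h6 := abs6 (-(∑' k : ℕ, a (-(i : ℤ) - 1 - k) * b ((j : ℤ) + 1 + k)))
        (∑' k : ℕ, a ((k : ℤ) - i) * Eb k j)
        (-((∑' k : ℕ, a (-(i : ℤ) - 1 - k)) * vb j))
        (∑' k : ℕ, Ea i k * b ((j : ℤ) - k))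
        (∑' k : ℕ, Ea i k * Eb k j)
        ((∑' k : ℕ, Ea i k) * vb j)
      rw [abs_neg, abs_neg, abs_mul, abs_mul] at h6
      exact h6
    have hsumrhs : Summable fun j : ℕ =>
        |∑' k : ℕ, a (-(i : ℤ) - 1 - k) * b ((j : ℤ) + 1 + k)|
        + |∑' k : ℕ, a ((k : ℤ) - i) * Eb k j|
        + |∑' k : ℕ, a (-(i : ℤ) - 1 - k)| * |vb j|
        + |∑' k : ℕ, Ea i k * b ((j : ℤ) - k)|
        + |∑' k : ℕ, Ea i k * Eb k j|
        + |∑' k : ℕ, Ea i k| * |vb j| :=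
      (((((F1.add F2).add F3).add F4).add F5).add F6)
    have step := Summable.tsum_le_tsum hpt (hEcrow i) hsumrhs
    have split : (∑' j : ℕ, (|∑' k : ℕ, a (-(i : ℤ) - 1 - k) * b ((j : ℤ) + 1 + k)|
        + |∑' k : ℕ, a ((k : ℤ) - i) * Eb k j|
        + |∑' k : ℕ, a (-(i : ℤ) - 1 - k)| * |vb j|
        + |∑' k : ℕ, Ea i k * b ((j : ℤ) - k)|
        + |∑' k : ℕ, Ea i k * Eb k j|
        + |∑' k : ℕ, Ea i k| * |vb j|))
        = (∑' j : ℕ, |∑' k : ℕ, a (-(i : ℤ) - 1 - k) * b ((j : ℤ) + 1 + k)|)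
        + (∑' j, |∑' k : ℕ, a ((k : ℤ) - i) * Eb k j|)
        + (∑' j, |∑' k : ℕ, a (-(i : ℤ) - 1 - k)| * |vb j|)
        + (∑' j : ℕ, |∑' k : ℕ, Ea i k * b ((j : ℤ) - k)|)
        + (∑' j, |∑' k : ℕ, Ea i k * Eb k j|)
        + ∑' j, |∑' k : ℕ, Ea i k| * |vb j| := by
      rw [Summable.tsum_add ((((F1.add F2).add F3).add F4).add F5) F6,
        Summable.tsum_add (((F1.add F2).add F3).add F4) F5,
        Summable.tsum_add ((F1.add F2).add F3) F4,
        Summable.tsum_add (F1.add F2) F3, Summable.tsum_add F1 F2]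
    rw [split] at step
    refine step.trans ?_
    have habs2 : |∑' k : ℕ, a (-(i : ℤ) - 1 - k)| ≤ ∑' k : ℕ, |a (-(i : ℤ) - 1 - k)| := by
      have := norm_tsum_le_tsum_norm (f := fun k : ℕ => a (-(i : ℤ) - 1 - k))
        (by simp only [Real.norm_eq_abs]; exact hsa2 i)
      simpa [Real.norm_eq_abs] using this
    have habsEa : |∑' k : ℕ, Ea i k| ≤ ∑' k : ℕ, |Ea i k| := by
      have := norm_tsum_le_tsum_norm (f := fun k : ℕ => Ea i k)
        (by simp only [Real.norm_eq_abs]; exact hEaR i)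
      simpa [Real.norm_eq_abs] using this
    have t1 : (∑' j : ℕ, |∑' k : ℕ, a (-(i : ℤ) - 1 - k) * b ((j : ℤ) + 1 + k)|)
        ≤ (∑' k : ℕ, |a (-(i : ℤ) - 1 - k)|) * Mb :=
      (L1 i).2.2.trans (coarse _ (hsa2 i) _ Mb (fun k => hsb2M k))
    have t2 : (∑' j, |∑' k : ℕ, a ((k : ℤ) - i) * Eb k j|)
        ≤ ∑' k : ℕ, |a ((k : ℤ) - i)| * ∑' j, |Eb k j| := (L2 i).2.2
    have t3 : (∑' j, |∑' k : ℕ, a (-(i : ℤ) - 1 - k)| * |vb j|)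
        ≤ (∑' k : ℕ, |a (-(i : ℤ) - 1 - k)|) * NV := by
      rw [tsum_mul_left, hNVdef]
      exact mul_le_mul_of_nonneg_right habs2 (hNVdef ▸ hNV0)
    have t4 : (∑' j : ℕ, |∑' k : ℕ, Ea i k * b ((j : ℤ) - k)|) ≤ (∑' j, |Ea i j|) * Mb :=
      (L4 i).2.2.trans (coarse _ (hEaR i) _ Mb (fun k => hsb1M k))
    have t5 : (∑' j, |∑' k : ℕ, Ea i k * Eb k j|) ≤ (∑' j, |Ea i j|) * MEb :=
      (L5 i).2.2.trans (coarse _ (hEaR i) _ MEb hMEb)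
    have t6 : (∑' j, |∑' k : ℕ, Ea i k| * |vb j|) ≤ (∑' j, |Ea i j|) * NV := by
      rw [tsum_mul_left, hNVdef]
      exact mul_le_mul_of_nonneg_right habsEa (hNVdef ▸ hNV0)
    exact add_le_add (add_le_add (add_le_add (add_le_add (add_le_add t1 t2) t3) t4) t5) t6
  have hbndT : Tendsto (fun i : ℕ =>
      (∑' k : ℕ, |a (-(i : ℤ) - 1 - k)|) * Mb
      + (∑' k : ℕ, |a ((k : ℤ) - i)| * ∑' j, |Eb k j|)
      + (∑' k : ℕ, |a (-(i : ℤ) - 1 - k)|) * NV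
      + (∑' j, |Ea i j|) * Mb + (∑' j, |Ea i j|) * MEb + (∑' j, |Ea i j|) * NV)
      atTop (𝓝 0) := by
    have T1 := (tail_tendsto a).mul_const Mb
    have T2 := dom_tendsto a ha (fun k => ∑' j, |Eb k j|)
      (fun k => tsum_nonneg fun _ => abs_nonneg _) MEb hMEb hEbT
    have T3 := (tail_tendsto a).mul_const NV
    have T4 := hEaT.mul_const Mb
    have T5 := hEaT.mul_const MEb
    have T6 := hEaT.mul_const NV
    have := ((((T1.add T2).add T3).add T4).add T5).add T6
    simpa using this
  have hdecT : Tendsto (fun i => ∑' j, |Ec i j|) atTop (𝓝 0) :=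
    squeeze_zero (fun i => tsum_nonneg fun _ => abs_nonneg _) hEcbound hbndT
  have hdec : HasDecay Ec := ⟨hEcrow, hdecT⟩
  refine ⟨Ec, ⟨hEcrow, hdecT.bddAbove_range⟩, hdec, ?_⟩
  intro i j
  -- summability of the pieces
  have hf1 : Summable fun k : ℕ => a ((k : ℤ) - i) * b ((j : ℤ) - k) := by
    apply Summable.of_abs
    refine Summable.of_nonneg_of_le (fun k => abs_nonneg _) (fun k => ?_) ((hsa1 i).mul_right Mb)
    rw [abs_mul]
    exact mul_le_mul_of_nonneg_left (hbE _) (abs_nonneg _)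
  have hf2 : Summable fun k : ℕ => a ((k : ℤ) - i) * Eb k j := (L2 i).1 j
  have hf3 : Summable fun k : ℕ => a ((k : ℤ) - i) := (hsa1 i).of_abs
  have hf4 : Summable fun k : ℕ => Ea i k * b ((j : ℤ) - k) := (L4 i).1 j
  have hf5 : Summable fun k : ℕ => Ea i k * Eb k j := (L5 i).1 j
  have hf6 : Summable fun k : ℕ => Ea i k := (hEaR i).of_abs
  have hf7 : Summable fun k : ℕ => va k * (Toep b k j + Eb k j + vb j) := hvc1 j
  have expand : ∀ k : ℕ, (Toep a i k + Ea i k + va k) * (Toep b k j + Eb k j + vb j)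
      = ((a ((k : ℤ) - i) * b ((j : ℤ) - k) + a ((k : ℤ) - i) * Eb k j)
          + a ((k : ℤ) - i) * vb j)
      + ((Ea i k * b ((j : ℤ) - k) + Ea i k * Eb k j) + Ea i k * vb j)
      + va k * (Toep b k j + Eb k j + vb j) := by
    intro k
    simp only [Toep]
    ring
  have g1 : Summable fun k : ℕ => (a ((k : ℤ) - i) * b ((j : ℤ) - k)
      + a ((k : ℤ) - i) * Eb k j) + a ((k : ℤ) - i) * vb j :=
    (hf1.add hf2).add (hf3.mul_right (vb j))
  have g2 : Summable fun k : ℕ => (Ea i k * b ((j : ℤ) - k) + Ea i k * Eb k j)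
      + Ea i k * vb j :=
    (hf4.add hf5).add (hf6.mul_right (vb j))
  rw [tsum_congr expand, Summable.tsum_add (g1.add g2) hf7, Summable.tsum_add g1 g2,
    Summable.tsum_add (hf1.add hf2) (hf3.mul_right (vb j)), Summable.tsum_add hf1 hf2,
    Summable.tsum_add (hf4.add hf5) (hf6.mul_right (vb j)), Summable.tsum_add hf4 hf5,
    tsum_mul_right, tsum_mul_right]
  -- split the Toeplitz part
  have hfz : Summable fun n : ℤ => a n * b ((j : ℤ) - i - n) := by
    apply Summable.of_abs
    refine Summable.of_nonneg_of_le (fun n => abs_nonneg _) (fun n => ?_) (ha.mul_right Mb)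
    rw [abs_mul]
    exact mul_le_mul_of_nonneg_left (hbE _) (abs_nonneg _)
  have key1 := zsplit _ hfz i
  have e1 : (∑' k : ℕ, a ((k : ℤ) - i) * b ((j : ℤ) - i - ((k : ℤ) - i)))
      = ∑' k : ℕ, a ((k : ℤ) - i) * b ((j : ℤ) - k) :=
    tsum_congr fun k => by rw [show (j : ℤ) - i - ((k : ℤ) - i) = (j : ℤ) - k by ring]
  have e2 : (∑' k : ℕ, a (-(i : ℤ) - 1 - k) * b ((j : ℤ) - i - (-(i : ℤ) - 1 - k)))
      = ∑' k : ℕ, a (-(i : ℤ) - 1 - k) * b ((j : ℤ) + 1 + k) :=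
    tsum_congr fun k => by rw [show (j : ℤ) - i - (-(i : ℤ) - 1 - k) = (j : ℤ) + 1 + k by ring]
  have hzeq : Toep (zconv a b) i j
      = (∑' k : ℕ, a ((k : ℤ) - i) * b ((j : ℤ) - k))
        + ∑' k : ℕ, a (-(i : ℤ) - 1 - k) * b ((j : ℤ) + 1 + k) := by
    show zconv a b ((j : ℤ) - i) = _
    show (∑' n : ℤ, a n * b ((j : ℤ) - i - n)) = _
    rw [key1, e1, e2]
  have key3 := zsplit a ha.of_abs i
  have hsig : (∑' k : ℕ, a ((k : ℤ) - i))
      = (∑' n : ℤ, a n) - ∑' k : ℕ, a (-(i : ℤ) - 1 - k) := by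
    rw [key3]; ring
  rw [hsig, hzeq]
  simp only [hEcdef]
  ring
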